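/- arXiv:2510.13602 — 3 statements merged into one kernel-verified Lean document; each statement's English description precedes it below -/
import Mathlib

section
/- Let s^e : Fin n → ℝ be injective, k ≤ n, and for k ≤ t ≤ n let B(t) ⊆ {0,…,t-1} be the set of indices of the k largest values of s^e on the prefix {0,…,t-1}. Then for any t1 ≤ t2 (both ≥ k), B(t2) ⊆ B(t1) ∪ {t1, t1+1, …, t2-1}. -/
open Finset

/-- The prefix `{0, …, t-1}` of token indices. -/
def pref (n t : ℕ) : Finset (Fin n) := Finset.univ.filter (fun j => (j : ℕ) < t)

/-- `T` is the set of indices of the `k` largest values of `s` on `P`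
(well defined when `s` is injective and `k ≤ |P|`). -/
def IsTopK {n : ℕ} (s : Fin n → ℝ) (P : Finset (Fin n)) (k : ℕ) (T : Finset (Fin n)) : Prop :=
  T ⊆ P ∧ T.card = k ∧ ∀ i ∈ T, ∀ j ∈ P, j ∉ T → s j < s i

/-- `T` is the top-`k` set on `P` of the score obtained from `s` by boosting the
indices in `S` to `+∞` (a value larger than every value of `s`, ties broken in favor of `S`). -/
def IsBoostTopK {n : ℕ} (s : Fin n → ℝ) (P S : Finset (Fin n)) (k : ℕ) (T : Finset (Fin n)) : Prop :=
  T ⊆ P ∧ T.card = k ∧ S ⊆ T ∧ ∀ i ∈ T, i ∉ S → ∀ j ∈ P, j ∉ T → s j < s i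

/-- Query-agnostic eviction constraint: tokens selected at a later step are either
selected at the earlier step or newly arrived. -/
theorem eviction_constraint (n k : ℕ) (se : Fin n → ℝ) (hse : Function.Injective se)
    (hk : k ≤ n) (B : ℕ → Finset (Fin n))
    (hB : ∀ t, k ≤ t → t ≤ n → IsTopK se (pref n t) k (B t)) :
    ∀ t1 t2, k ≤ t1 → t1 ≤ t2 → t2 ≤ n →
      B t2 ⊆ B t1 ∪ Finset.univ.filter (fun j : Fin n => t1 ≤ (j : ℕ) ∧ (j : ℕ) < t2) := by
  intro t1 t2 hk1 h12 h2n i hi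
  obtain ⟨hT2P, hT2c, hT2max⟩ := hB t2 (hk1.trans h12) h2n
  obtain ⟨hT1P, hT1c, hT1max⟩ := hB t1 hk1 (h12.trans h2n)
  by_cases hlt : (i : ℕ) < t1
  · refine Finset.mem_union_left _ ?_
    by_contra hnot
    -- every a ∈ B t1 has se i < se a
    have hbig : ∀ a ∈ B t1, se i < se a := by
      intro a ha
      exact hT1max a ha i (by simp [pref, hlt]) hnot
    -- B t1 ∪ {i} has card k+1 > card B t2, so some a ∈ B t1 \ B t2
    have hins : ¬ insert i (B t1) ⊆ B t2 := by
      intro hsub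
      have := Finset.card_le_card hsub
      rw [Finset.card_insert_of_notMem hnot, hT1c, hT2c] at this
      omega
    obtain ⟨a, ha, hanot⟩ := Finset.not_subset.mp hins
    rcases Finset.mem_insert.mp ha with rfl | ha1
    · exact hanot hi
    · have h1 : se a < se i :=
        hT2max i hi a (by
          have := hT1P ha1
          simp only [pref, Finset.mem_filter] at this ⊢
          exact ⟨Finset.mem_univ a, lt_of_lt_of_le this.2 h12⟩) hanot
      exact absurd (hbig a ha1) (not_lt.mpr h1.le)
  · refine Finset.mem_union_right _ ?_
    have := hT2P hi
    simp only [pref, Finset.mem_filter] at this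
    simp [not_lt.mp hlt, this.2]
end

section
/- Let s^e : Fin n → ℝ be injective, k ≤ n, and for k ≤ t ≤ n let B(t) ⊆ {0,…,t-1} be the top-k set of s^e on the prefix {0,…,t-1}. If j < t1 ≤ t2 and j ∉ B(t1), then j ∉ B(t2). -/
open Finset

/-- Fixed eviction pattern: once a token is evicted, it is never re-selected. -/
theorem evicted_stays_evicted (n k : ℕ) (se : Fin n → ℝ) (hse : Function.Injective se)
    (hk : k ≤ n) (B : ℕ → Finset (Fin n))
    (hB : ∀ t, k ≤ t → t ≤ n → IsTopK se (pref n t) k (B t)) :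
    ∀ (j : Fin n) (t1 t2 : ℕ), (j : ℕ) < t1 → k ≤ t1 → t1 ≤ t2 → t2 ≤ n →
      j ∉ B t1 → j ∉ B t2 := by
  intro j t1 t2 hj hkt1 h12 h2n hj1 hj2
  obtain ⟨hsub1, hcard1, htop1⟩ := hB t1 hkt1 (le_trans h12 h2n)
  obtain ⟨hsub2, hcard2, htop2⟩ := hB t2 (le_trans hkt1 h12) h2n
  -- there is some i ∈ B t1 with i ∉ B t2
  have hne : ¬ B t1 ⊆ B t2 := by
    intro hss
    have : B t1 ⊂ B t2 := ⟨hss, fun h => hj1 (h hj2)⟩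
    have := Finset.card_lt_card this
    omega
  obtain ⟨i, hi1, hi2⟩ := not_subset.mp hne
  have hjP1 : j ∈ pref n t1 := by simp [pref, hj]
  have hiP2 : i ∈ pref n t2 := by
    have := hsub1 hi1
    simp only [pref, mem_filter, mem_univ, true_and] at this ⊢
    omega
  have h1 : se j < se i := htop1 i hi1 j hjP1 hj1
  have h2 : se i < se j := htop2 j hj2 i hiP2 hi2
  linarith
end

section
/- Let s^e : Fin n → ℝ be injective and k_e ≤ m ≤ n. Define E(m) as the top-k_e set of s^e on the prefix {0,…,m-1}. Then the family {E(m)} satisfies: E(m') ⊆ E(m) ∪ {m, m+1, …, m'-1} for all m ≤ m', and consequently the sequence of 'evicted' sets D(m) = {0,…,m-1} \ E(m) is monotone increasing: D(m) ⊆ D(m') for m ≤ m'. -/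
open Finset

/-- Monotone eviction: the top-`k_e` prefix sets satisfy the eviction constraint,
and the evicted sets `D(m) = {0,…,m-1} \ E(m)` are monotone increasing. -/
theorem monotone_eviction (n k_e : ℕ) (se : Fin n → ℝ) (hse : Function.Injective se)
    (hk : k_e ≤ n) (E : ℕ → Finset (Fin n))
    (hE : ∀ m, k_e ≤ m → m ≤ n → IsTopK se (pref n m) k_e (E m)) :
    (∀ m m', k_e ≤ m → m ≤ m' → m' ≤ n →
      E m' ⊆ E m ∪ Finset.univ.filter (fun j : Fin n => m ≤ (j : ℕ) ∧ (j : ℕ) < m')) ∧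
    (∀ m m', k_e ≤ m → m ≤ m' → m' ≤ n →
      pref n m \ E m ⊆ pref n m' \ E m') := by
  have key : ∀ m m', k_e ≤ m → m ≤ m' → m' ≤ n →
      ∀ x ∈ E m', (x : ℕ) < m → x ∈ E m := by
    intro m m' hkm hmm' hm'n x hx hxm
    by_contra hxE
    obtain ⟨hT1, hT2, hT3⟩ := hE m hkm (hmm'.trans hm'n)
    obtain ⟨hT1', hT2', hT3'⟩ := hE m' (hkm.trans hmm') hm'n
    have hsub : E m ⊆ E m' := by
      intro i hi
      by_contra hi'
      have h1 : se x < se i := hT3 i hi x (by simp [pref, hxm]) hxE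
      have h2 : se i < se x :=
        hT3' x hx i (by
          have := hT1 hi
          simp only [pref, mem_filter] at this ⊢
          exact ⟨this.1, lt_of_lt_of_le this.2 hmm'⟩) hi'
      exact absurd (h1.trans h2) (lt_irrefl _)
    have : E m ⊂ E m' := Finset.ssubset_iff_of_subset hsub |>.2 ⟨x, hx, hxE⟩
    have := Finset.card_lt_card this
    omega
  constructor
  · intro m m' hkm hmm' hm'n x hx
    simp only [mem_union, mem_filter, mem_univ, true_and]
    obtain ⟨hT1', _, _⟩ := hE m' (hkm.trans hmm') hm'n
    have hxm' : (x : ℕ) < m' := by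
      have := hT1' hx; simpa [pref] using this
    by_cases h : (x : ℕ) < m
    · exact Or.inl (key m m' hkm hmm' hm'n x hx h)
    · exact Or.inr ⟨le_of_not_gt h, hxm'⟩
  · intro m m' hkm hmm' hm'n x hx
    simp only [mem_sdiff, pref, mem_filter, mem_univ, true_and] at hx ⊢
    refine ⟨lt_of_lt_of_le hx.1 hmm', fun hxE => hx.2 ?_⟩
    exact key m m' hkm hmm' hm'n x hxE hx.1
end
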